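/- Let n ≥ 2 be a natural number, a ≥ b > 0, θ = π/(2n), and k₀ = (√(a² + b² tan²θ) − a)/tan θ. If A₁, A₂ ∈ [b, a] and 0 < k ≤ k₀, then the complex number z = (A₁ + ik)(A₂ + ik) satisfies Re z ≥ b² − k² > 0 and 0 < Im z ≤ tan(π/(2n)) · Re z. -/

import Mathlib

open Real Complex

/-!
With `t = tan θ`, the number `k₀` is the positive root of `t (b² − x²) = 2 a x`; the left side
minus the right side decreases in `x ≥ 0`, so every `0 < k ≤ k₀` satisfies `2 b k ≤ 2 a k ≤
t (b² − k²)`, i.e. `b + i k` lies in the sector of half-angle `θ / 2`. Moving `A₁, A₂` up from `b`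
only decreases the arguments of `A₁ + i k` and `A₂ + i k`, so their product lies in the sector of
half-angle `θ`.
-/

lemma tan_pi_div_two_mul_pos {n : ℕ} (hn : 2 ≤ n) : 0 < Real.tan (π / (2 * n)) := by
  have h4 : (4 : ℝ) ≤ 2 * n := by
    have : (2 : ℝ) ≤ n := by exact_mod_cast hn
    linarith
  apply tan_pos_of_pos_of_lt_pi_div_two (by positivity)
  calc π / (2 * n) ≤ π / 4 := div_le_div_of_nonneg_left pi_pos.le (by norm_num) h4
    _ < π / 2 := by linarith [pi_pos]

lemma mul_sq_sub_sq_eq_of_eq_sqrt_sub_div {a b t x : ℝ} (ht : t ≠ 0)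
    (hx : x = (√(a ^ 2 + b ^ 2 * t ^ 2) - a) / t) : t * (b ^ 2 - x ^ 2) = 2 * a * x := by
  have hsqrt : x * t + a = √(a ^ 2 + b ^ 2 * t ^ 2) := by
    rw [hx]; field_simp; ring
  have hsq : (x * t + a) ^ 2 = a ^ 2 + b ^ 2 * t ^ 2 := by
    rw [hsqrt, sq_sqrt (by positivity)]
  apply mul_left_cancel₀ ht
  linear_combination -hsq

lemma two_mul_mul_le_of_le_root {a b t x k : ℝ} (hroot : t * (b ^ 2 - x ^ 2) = 2 * a * x)
    (ht : 0 ≤ t) (ha : 0 ≤ a) (hk : 0 ≤ k) (hkx : k ≤ x) :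
    2 * a * k ≤ t * (b ^ 2 - k ^ 2) := by
  have hdecr : t * (b ^ 2 - x ^ 2) - 2 * a * x ≤ t * (b ^ 2 - k ^ 2) - 2 * a * k := by
    have hxk : 0 ≤ x - k := sub_nonneg.2 hkx
    have : 0 ≤ t * ((x - k) * (x + k)) + 2 * a * (x - k) := by
      have : 0 ≤ x + k := by linarith
      positivity
    linear_combination this
  linarith

lemma mul_add_le_mul_mul_sub_sq {b t k A₁ A₂ : ℝ} (hb : 0 < b) (ht : 0 ≤ t)
    (hbk : 2 * b * k ≤ t * (b ^ 2 - k ^ 2)) (hA₁ : b ≤ A₁) (hA₂ : b ≤ A₂) :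
    k * (A₁ + A₂) ≤ t * (A₁ * A₂ - k ^ 2) := by
  have hktb : k ≤ t * b := by nlinarith [mul_nonneg ht (sq_nonneg k), mul_nonneg ht hb.le]
  have hktA : k ≤ t * A₁ := hktb.trans (mul_le_mul_of_nonneg_left hA₁ ht)
  have : 0 ≤ (t * A₁ - k) * (A₂ - b) + (t * b - k) * (A₁ - b) :=
    add_nonneg (mul_nonneg (by linarith) (by linarith)) (mul_nonneg (by linarith) (by linarith))
  linear_combination this + hbk

theorem stmt_2 (n : ℕ) (hn : 2 ≤ n) (a b : ℝ) (hab : b ≤ a) (hb : 0 < b)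
    (θ k₀ : ℝ) (hθ : θ = π / (2 * n))
    (hk₀ : k₀ = (Real.sqrt (a ^ 2 + b ^ 2 * Real.tan θ ^ 2) - a) / Real.tan θ)
    (A₁ A₂ k : ℝ) (hA₁ : A₁ ∈ Set.Icc b a) (hA₂ : A₂ ∈ Set.Icc b a)
    (hk : 0 < k) (hkk : k ≤ k₀)
    (z : ℂ) (hz : z = ((A₁ : ℂ) + Complex.I * k) * ((A₂ : ℂ) + Complex.I * k)) :
    (0 < b ^ 2 - k ^ 2 ∧ b ^ 2 - k ^ 2 ≤ z.re) ∧
      0 < z.im ∧ z.im ≤ Real.tan (π / (2 * n)) * z.re := by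
  rw [← hθ]
  have ht : 0 < Real.tan θ := hθ ▸ tan_pi_div_two_mul_pos hn
  have hak := two_mul_mul_le_of_le_root (mul_sq_sub_sq_eq_of_eq_sqrt_sub_div ht.ne' hk₀)
    ht.le (hb.le.trans hab) hk.le hkk
  have hbk : 2 * b * k ≤ Real.tan θ * (b ^ 2 - k ^ 2) :=
    le_trans (by gcongr) hak
  have hre : z.re = A₁ * A₂ - k ^ 2 := by
    subst hz; simp only [mul_re, add_re, ofReal_re, mul_im, I_re, I_im, ofReal_im, add_im]; ring
  have him : z.im = k * (A₁ + A₂) := by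
    subst hz; simp only [mul_re, add_re, ofReal_re, mul_im, I_re, I_im, ofReal_im, add_im]; ring
  rw [hre, him]
  refine ⟨⟨pos_of_mul_pos_right ((by positivity : 0 < 2 * b * k).trans_le hbk) ht.le, ?_⟩,
    by nlinarith [hA₁.1, hA₂.1], mul_add_le_mul_mul_sub_sq hb ht.le hbk hA₁.1 hA₂.1⟩
  have := mul_le_mul hA₁.1 hA₂.1 hb.le (hb.le.trans hA₁.1)
  linarith
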